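/- For k = 0,…,m, with γ^{(k)} = (α_1-1,…,α_{m-1}-1, β_{k+1}+m-k) and δ^{(k)} = (β_1+1,…,β_k+1, β_{k+2},…,β_{m+1}), the product 𝒴(γ^{(k)})·𝒴(δ^{(k)}) is independent of k; specifically it equals 𝒴(α'-1)·𝒴(β'+1)·y_{1-m}^{-1}, where α'-1 = (α_1-1,…,α_{m-1}-1) and β'+1 = (β_1+1,…,β_{m+1}+1). -/

import Mathlib

/-!
With the prefix products `P(a) = y_a ⋯ y_1` (extended to `a < 0` so that
`P(a) = P(a-1) y_a`), every `Y(m, k)` equals `P(m) / P(m - k)`, so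
`𝒴(λ) = ∏ P(λ_i - i + 1) / ∏ P(1 - i)`. The numerator depends only on the shifted parts
`λ_i - i + 1`, and the shifted parts of `δ⁽ᵏ⁾` together with the last one of `γ⁽ᵏ⁾`, namely
`β_{k+1} - k + 1`, are exactly those of `β' + 1`, whatever `k` is. The denominators for lengths
`m, m` and `m - 1, m + 1` differ by `y_{1-m}`.
-/

/-- `Yprod y m k` is the product `y_m · y_{m-1} ⋯ y_{m+1-k}` for `k ≥ 1`,
`1` for `k = 0`, and `Y(m-k,-k)⁻¹` for `k ≤ -1`. -/
noncomputable def Yprod {R : Type*} [CommRing R] (y : ℤ → Rˣ) (m k : ℤ) : Rˣ :=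
  if 0 ≤ k then ∏ j ∈ Finset.range k.toNat, y (m - j)
  else (∏ j ∈ Finset.range (-k).toNat, y ((m - k) - j))⁻¹

/-- `𝒴(λ) = ∏_{i=1}^n Y(λ_i - i + 1, λ_i)` for a list `λ` of `n` integers
(`0`-indexed, so `λ_i - i + 1` becomes `l i - i`). -/
noncomputable def calY {R : Type*} [CommRing R] (y : ℤ → Rˣ) {n : ℕ}
    (l : Fin n → ℤ) : Rˣ :=
  ∏ i : Fin n, Yprod y (l i - (i : ℕ)) (l i)

theorem Int.eq_of_add_one_eq_mul {G : Type*} [Group G] {f g c : ℤ → G} (h₀ : f 0 = g 0)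
    (hf : ∀ k, f (k + 1) = f k * c k) (hg : ∀ k, g (k + 1) = g k * c k) : f = g := by
  funext k
  induction k using Int.induction_on with
  | zero => exact h₀
  | succ k ih => rw [hf, hg, ih]
  | pred k ih =>
    have hfk := hf (-k - 1)
    have hgk := hg (-k - 1)
    rw [sub_add_cancel] at hfk hgk
    rw [ih, hgk] at hfk
    exact (mul_right_cancel hfk).symm

section Yprod

variable {R : Type*} [CommRing R] (y : ℤ → Rˣ)

theorem Yprod_zero (m : ℤ) : Yprod y m 0 = 1 := by
  simp [Yprod]

theorem Yprod_add_one (m k : ℤ) : Yprod y m (k + 1) = Yprod y m k * y (m - k) := by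
  unfold Yprod
  rcases le_or_gt 0 k with hk | hk
  · rw [if_pos (by omega), if_pos hk, show (k + 1).toNat = k.toNat + 1 by omega,
      Finset.prod_range_succ, show m - (k.toNat : ℤ) = m - k by omega]
  obtain rfl | hk : k = -1 ∨ k < -1 := by omega
  · simp
  rw [if_neg (by omega), if_neg (by omega), show (-k).toNat = (-(k + 1)).toNat + 1 by omega,
    Finset.prod_range_succ', Nat.cast_zero, sub_zero, mul_inv, inv_mul_cancel_right]
  congr 1
  exact Finset.prod_congr rfl fun j _ => by congr 1; push_cast; ring

theorem Yprod_add_one_add_one (m k : ℤ) :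
    Yprod y (m + 1) (k + 1) = y (m + 1) * Yprod y m k := by
  refine congrFun (Int.eq_of_add_one_eq_mul (f := fun k => Yprod y (m + 1) (k + 1))
    (g := fun k => y (m + 1) * Yprod y m k) (c := fun k => y (m - k)) ?_ (fun k => ?_)
    (fun k => ?_)) k
  · show Yprod y (m + 1) (0 + 1) = y (m + 1) * Yprod y m 0
    rw [Yprod_add_one, Yprod_zero, Yprod_zero, one_mul, mul_one, sub_zero]
  · rw [Yprod_add_one y (m + 1) (k + 1), add_sub_add_right_eq_sub]
  · rw [Yprod_add_one, mul_assoc]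

/-- `Yprefix y a = y_a ⋯ y_1` for `a ≥ 0`, and `(y_0 ⋯ y_(a+1))⁻¹` for `a < 0`. -/
noncomputable def Yprefix (a : ℤ) : Rˣ := Yprod y a a

theorem Yprefix_add_one (a : ℤ) : Yprefix y (a + 1) = Yprefix y a * y (a + 1) := by
  rw [Yprefix, Yprefix, Yprod_add_one_add_one, mul_comm]

theorem Yprod_eq_mul_inv (m k : ℤ) : Yprod y m k = Yprefix y m * (Yprefix y (m - k))⁻¹ := by
  refine congrFun (Int.eq_of_add_one_eq_mul (g := fun k => Yprefix y m * (Yprefix y (m - k))⁻¹)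
    (c := fun k => y (m - k)) ?_ (Yprod_add_one y m) fun k => ?_) k
  · simp [Yprod_zero]
  · rw [show m - k = m - (k + 1) + 1 by ring, Yprefix_add_one, mul_inv, ← mul_assoc,
      inv_mul_cancel_right]

theorem calY_eq_prod_mul_inv {n : ℕ} (l : Fin n → ℤ) :
    calY y l = (∏ i, Yprefix y (l i - i)) * (∏ i : Fin n, Yprefix y (-i))⁻¹ := by
  simp only [calY, Yprod_eq_mul_inv, sub_sub_cancel_left, Finset.prod_mul_distrib,
    Finset.prod_inv_distrib]

theorem prod_Yprefix_neg_sq (n : ℕ) :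
    (∏ i : Fin (n + 1), Yprefix y (-i)) * ∏ i : Fin (n + 1), Yprefix y (-i) =
      (∏ i : Fin n, Yprefix y (-i)) * (∏ i : Fin (n + 2), Yprefix y (-i)) * y (-n) := by
  have h := Yprefix_add_one y (-(n + 1 : ℕ))
  rw [show -((n + 1 : ℕ) : ℤ) + 1 = -n by push_cast; ring] at h
  simp only [Fin.prod_univ_castSucc, Fin.val_castSucc, Fin.val_last, h]
  ac_rfl

end Yprod

theorem Fin.prod_add_one_sub_val_eq_mul_prod_ite {M : Type*} [CommMonoid M] {n : ℕ}
    (g : ℤ → M) (β : Fin (n + 1) → ℤ) (k : Fin (n + 1)) :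
    ∏ j, g (β j + 1 - j) =
      g (β k + 1 - k) *
        ∏ i : Fin n, g ((if (i : ℕ) < k then β i.castSucc + 1 else β i.succ) - i) := by
  rw [Fin.prod_univ_succAbove _ k]
  congr 1
  refine Finset.prod_congr rfl fun i _ => ?_
  split_ifs with hik
  · rw [Fin.succAbove_of_castSucc_lt _ _ (by simpa [Fin.lt_def] using hik), Fin.val_castSucc]
  · rw [Fin.succAbove_of_le_castSucc _ _ (by simpa [Fin.le_def] using hik), Fin.val_succ]
    congr 1
    push_cast
    ring

/-- For `k = 0,…,m`, with `γ⁽ᵏ⁾ = (α_1-1,…,α_{m-1}-1, β_{k+1}+m-k)` and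
`δ⁽ᵏ⁾ = (β_1+1,…,β_k+1, β_{k+2},…,β_{m+1})`, the product
`𝒴(γ⁽ᵏ⁾)·𝒴(δ⁽ᵏ⁾)` is independent of `k`: it equals
`𝒴(α'-1)·𝒴(β'+1)·y_{1-m}⁻¹`, where `α'-1 = (α_1-1,…,α_{m-1}-1)` and
`β'+1 = (β_1+1,…,β_{m+1}+1)`. -/
theorem stmt16 {R : Type*} [CommRing R] (y : ℤ → Rˣ)
    (m : ℕ) (hm : 1 ≤ m) (α : Fin (m - 1) → ℤ) (β : Fin (m + 1) → ℤ)
    (k : Fin (m + 1)) :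
    calY y (fun i : Fin m =>
        if hi : (i : ℕ) < m - 1 then α ⟨i, hi⟩ - 1
        else β k + (m : ℤ) - (k : ℕ)) *
      calY y (fun i : Fin m =>
        if (i : ℕ) < (k : ℕ) then β (Fin.castSucc i) + 1 else β i.succ) =
    calY y (fun i : Fin (m - 1) => α i - 1) *
      calY y (fun i : Fin (m + 1) => β i + 1) * (y (1 - (m : ℤ)))⁻¹ := by
  obtain ⟨n, rfl⟩ : ∃ n, m = n + 1 := ⟨m - 1, by omega⟩
  -- reindex `α` by `Fin n` so that its entries match those produced by `Fin.prod_univ_castSucc`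
  revert α
  rw [Nat.add_sub_cancel]
  intro α
  simp only [calY_eq_prod_mul_inv]
  rw [Fin.prod_univ_castSucc]
  simp only [Fin.val_castSucc, Fin.is_lt, dite_true, Fin.val_last, lt_irrefl, dite_false]
  rw [Fin.prod_add_one_sub_val_eq_mul_prod_ite (Yprefix y) β k,
    show β k + ((n + 1 : ℕ) : ℤ) - k - n = β k + 1 - k by push_cast; ring,
    show (1 : ℤ) - (n + 1 : ℕ) = -n by push_cast; ring, mul_mul_mul_comm, ← mul_inv,
    prod_Yprefix_neg_sq, mul_inv, mul_inv]
  ac_rfl
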